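/- Let M be an irreducible Markov chain on a countable state space V, let A ⊆ W be a tail event, and let r ∈ (0, 1/2). For every starting state z ∈ V and every k ≥ 1, the probability that the chain started at z alternates k times between A_r and Z_r — i.e., that there exist times t_0 < t_1 < … < t_k such that the positions Z^{t_0}, Z^{t_1}, …, Z^{t_k} lie alternately in A_r and in Z_r — is less than (2r)^k. -/

import Mathlib

open MeasureTheory Filter Set Topology
open scoped Classical

/-- An irreducible Markov chain on a countable state space `V`, given together with
its family of path-space laws `μ z` (the law of the chain started at `z`),
characterised on cylinder sets by the transition probabilities. -/
structure MarkovChain (V : Type*) [Countable V] [MeasurableSpace V] where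
  /-- transition probabilities -/
  p : V → V → ℝ
  p_nonneg : ∀ x y, 0 ≤ p x y
  p_row_sum : ∀ x, HasSum (p x) 1
  irred : ∀ x y : V, ∃ (n : ℕ) (w : ℕ → V),
    w 0 = x ∧ w n = y ∧ ∀ i < n, 0 < p (w i) (w (i + 1))
  /-- the law of the chain started at `z`, on the path space `ℕ → V` -/
  μ : V → Measure (ℕ → V)
  μ_prob : ∀ z, IsProbabilityMeasure (μ z)
  μ_cyl : ∀ (z : V) (n : ℕ) (w : ℕ → V),
    (μ z {ω : ℕ → V | ∀ i ≤ n, ω i = w i}).toReal =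
      if w 0 = z then ∏ i ∈ Finset.range n, p (w i) (w (i + 1)) else 0

variable {V : Type*} [Countable V] [MeasurableSpace V]

/-- `h : V → ℝ` is harmonic if `h x = ∑_y p x y * h y` for every `x`. -/
def IsHarmonic (M : MarkovChain V) (h : V → ℝ) : Prop :=
  ∀ x, HasSum (fun y => M.p x y * h y) (h x)

/-- The event `1^s` that the values of `s` along the trajectory converge to `1`. -/
def oneEvent (s : V → ℝ) : Set (ℕ → V) :=
  {ω | Tendsto (fun n => s (ω n)) atTop (𝓝 1)}

/-- The event `0^s` that the values of `s` along the trajectory converge to `0`. -/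
def zeroEvent (s : V → ℝ) : Set (ℕ → V) :=
  {ω | Tendsto (fun n => s (ω n)) atTop (𝓝 0)}

/-- A harmonic function `s : V → [0,1]` is sharp if, for every starting state,
the values of `s` along the trajectory of the chain converge to `0` or `1`
almost surely. -/
def IsSharp (M : MarkovChain V) (s : V → ℝ) : Prop :=
  IsHarmonic M s ∧ (∀ x, s x ∈ Set.Icc (0 : ℝ) 1) ∧
  ∀ z, ∀ᵐ ω ∂ M.μ z,
    Tendsto (fun n => s (ω n)) atTop (𝓝 0) ∨ Tendsto (fun n => s (ω n)) atTop (𝓝 1)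

/-- A tail event: a measurable event invariant under deleting the first step. -/
def IsTailEvent (A : Set (ℕ → V)) : Prop :=
  MeasurableSet A ∧ (fun ω : ℕ → V => fun n => ω (n + 1)) ⁻¹' A = A

/-- An `M`-boundary: a measurable space `N` with measures `ν z`, `z ∈ V`, and a
measurable, shift-invariant, measure-preserving map `f` from path space to `N`. -/
structure MBoundary (M : MarkovChain V) (N : Type*) [MeasurableSpace N] where
  ν : V → Measure N
  f : (ℕ → V) → N
  f_meas : Measurable f
  shift_inv : ∀ ω : ℕ → V, f (fun n => ω (n + 1)) = f ω
  meas_pres : ∀ (z : V) (X : Set N), MeasurableSet X → ν z X = M.μ z (f ⁻¹' X)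

/-- The `M`-boundary is faithful to a sharp harmonic function `s` if some measurable
`X ⊆ N` satisfies `μ_z (1^s △ f⁻¹ X) = 0` for every `z`. -/
def Faithful {N : Type*} [MeasurableSpace N] (M : MarkovChain V) (B : MBoundary M N)
    (s : V → ℝ) : Prop :=
  ∃ X : Set N, MeasurableSet X ∧ ∀ z, M.μ z (symmDiff (oneEvent s) (B.f ⁻¹' X)) = 0

/-- The `M`-boundary is a realisation of the Poisson boundary: every bounded harmonic
function is the integral of an essentially unique bounded measurable function on `N`,
and conversely integrating any bounded measurable function on `N` gives a bounded
harmonic function. -/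
def IsRealisation {N : Type*} [MeasurableSpace N] (M : MarkovChain V)
    (B : MBoundary M N) : Prop :=
  (∀ h : V → ℝ, IsHarmonic M h → (∃ C, ∀ x, |h x| ≤ C) →
    ∃ hhat : N → ℝ, Measurable hhat ∧ (∃ C, ∀ η, |hhat η| ≤ C) ∧
      (∀ z, h z = ∫ η, hhat η ∂ B.ν z) ∧
      (∀ g : N → ℝ, Measurable g → (∃ C, ∀ η, |g η| ≤ C) →
        (∀ z, h z = ∫ η, g η ∂ B.ν z) → ∀ z, hhat =ᵐ[B.ν z] g)) ∧
  (∀ g : N → ℝ, Measurable g → (∃ C, ∀ η, |g η| ≤ C) →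
    (∃ C, ∀ z, |∫ η, g η ∂ B.ν z| ≤ C) ∧ IsHarmonic M (fun z => ∫ η, g η ∂ B.ν z))

/-- `A_r`: the set of states from which the tail event `A` holds with probability
greater than `1 - r`. -/
def tailBig (M : MarkovChain V) (A : Set (ℕ → V)) (r : ℝ) : Set V :=
  {v | (M.μ v A).toReal > 1 - r}

/-- `Z_r`: the set of states from which the tail event `A` holds with probability
less than `r`. -/
def tailSmall (M : MarkovChain V) (A : Set (ℕ → V)) (r : ℝ) : Set V :=
  {v | (M.μ v A).toReal < r}

/-- The event that a trajectory alternates `k` times between the sets `A` and `Z`: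
there are times `t 0 < t 1 < … < t k` whose positions lie alternately in `A` and
in `Z` (starting with either). -/
def alternatesEvent (A Z : Set V) (k : ℕ) : Set (ℕ → V) :=
  {ω | ∃ t : ℕ → ℕ, StrictMonoOn t (Set.Iic k) ∧
    ((∀ i ≤ k, (Even i → ω (t i) ∈ A) ∧ (¬ Even i → ω (t i) ∈ Z)) ∨
     (∀ i ≤ k, (Even i → ω (t i) ∈ Z) ∧ (¬ Even i → ω (t i) ∈ A)))}

/-!
For `v ∈ A_r` let `P` be the probability of ever entering `Z_r` from `v`. As `A` is shift
invariant, the strong Markov property at the first entry time into `Z_r` gives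
`1 - r < μ_v(A) ≤ r P + (1 - P)`, hence `P ≤ r / (1 - r)`; the same argument for `Aᶜ` bounds the
probability of entering `A_r` from `Z_r`. Alternating `k` times means entering `A_r ∪ Z_r` and then
crossing `k` times between the two sets, each crossing starting at the first entry of the previous
one, so it has probability at most `(r / (1 - r)) ^ k < (2 r) ^ k`.

The σ-algebra on `V` is arbitrary, so events such as "the path enters `S`" need not be measurable.
The Markov property is proved for measurable sets from the cylinder formula by uniqueness of
measures on the π-system of cylinders, and applied to arbitrary events through `toMeasurable`;
events depending on finitely many steps are measured by summing path weights.
-/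

open scoped ENNReal

section Paths

variable {α : Type*}

def pathPrefix (n : ℕ) (ω : ℕ → α) : Fin (n + 1) → α := fun i => ω i

def pathShift (n : ℕ) (ω : ℕ → α) : ℕ → α := fun i => ω (i + n)

lemma measurable_pathShift [MeasurableSpace α] (n : ℕ) : Measurable (pathShift (α := α) n) :=
  measurable_pi_lambda _ fun _ => measurable_pi_apply _

lemma pathShift_pathShift (m n : ℕ) (ω : ℕ → α) :
    pathShift n (pathShift m ω) = pathShift (n + m) ω := by
  funext i
  simp only [pathShift, Nat.add_assoc]

lemma preimage_pathShift_of_shift_invariant {A : Set (ℕ → α)}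
    (hA : (fun ω : ℕ → α => fun n => ω (n + 1)) ⁻¹' A = A) (n : ℕ) :
    pathShift n ⁻¹' A = A := by
  induction n with
  | zero => rfl
  | succ n ih =>
    have hcomp : pathShift (n + 1) = (fun ω : ℕ → α => fun i => ω (i + 1)) ∘ pathShift n := by
      funext ω i
      simp only [pathShift, Function.comp_apply, Nat.add_right_comm, Nat.add_assoc]
    rw [hcomp, Set.preimage_comp, hA, ih]

def extendPath {n : ℕ} (e : Fin (n + 1) → α) : ℕ → α := fun i => e ⟨min i n, by omega⟩

lemma extendPath_of_le {n : ℕ} (e : Fin (n + 1) → α) {i : ℕ} (h : i ≤ n) :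
    extendPath e i = e ⟨i, by omega⟩ := by
  simp only [extendPath, Nat.min_eq_left h]

lemma extendPath_zero {n : ℕ} (e : Fin (n + 1) → α) : extendPath e 0 = e 0 :=
  extendPath_of_le e (Nat.zero_le n)

/-- `e` followed by `f`, the last point of `e` being identified with the first point of `f`. -/
def pathGlue {n m : ℕ} (e : Fin (n + 1) → α) (f : Fin (m + 1) → α) : Fin (n + m + 1) → α :=
  fun j => if h : j.1 < n then e ⟨j, by omega⟩ else f ⟨j - n, by omega⟩

def pathInit (n m : ℕ) (w : Fin (n + m + 1) → α) : Fin (n + 1) → α :=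
  fun i => w (Fin.castLE (by omega) i)

def pathTail (n m : ℕ) (w : Fin (n + m + 1) → α) : Fin (m + 1) → α :=
  fun j => w ⟨j + n, by omega⟩

lemma pathTail_pathGlue {n m : ℕ} (e : Fin (n + 1) → α) (f : Fin (m + 1) → α) :
    pathTail n m (pathGlue e f) = f := by
  funext j
  simp [pathTail, pathGlue]

lemma pathInit_pathGlue {n m : ℕ} (e : Fin (n + 1) → α) {f : Fin (m + 1) → α}
    (hf : f 0 = e (Fin.last n)) : pathInit n m (pathGlue e f) = e := by
  funext i
  simp only [pathInit, pathGlue, Fin.val_castLE]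
  split_ifs with h
  · rfl
  · obtain rfl : i = Fin.last n := Fin.ext (by simp; omega)
    simp [← hf]

lemma pathGlue_pathInit_pathTail {n m : ℕ} (w : Fin (n + m + 1) → α) :
    pathGlue (pathInit n m w) (pathTail n m w) = w := by
  funext j
  simp only [pathGlue, pathInit, pathTail]
  split_ifs with h
  · rfl
  · congr 1; ext; simp; omega

lemma pathGlue_of_le {n m : ℕ} (e : Fin (n + 1) → α) {f : Fin (m + 1) → α}
    (hf : f 0 = e (Fin.last n)) (j : Fin (n + m + 1)) (hj : j.1 ≤ n) :
    pathGlue e f j = e ⟨j, by omega⟩ := by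
  simp only [pathGlue]
  split_ifs with h
  · rfl
  · have hjn : j.1 = n := by omega
    simp only [hjn, Nat.sub_self]
    exact hf

lemma pathGlue_of_ge {n m : ℕ} (e : Fin (n + 1) → α) (f : Fin (m + 1) → α)
    (j : Fin (n + m + 1)) (hj : n ≤ j.1) : pathGlue e f j = f ⟨j - n, by omega⟩ := by
  simp only [pathGlue, dif_neg (Nat.not_lt.mpr hj)]

lemma exists_pathPrefix_preimage_of_mem_measurableCylinders [MeasurableSpace α] {s : Set (ℕ → α)}
    (hs : s ∈ measurableCylinders fun _ : ℕ => α) :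
    ∃ (m : ℕ) (T : Set (Fin (m + 1) → α)), s = pathPrefix m ⁻¹' T := by
  obtain ⟨F, S, -, rfl⟩ := (mem_measurableCylinders s).mp hs
  have hle : ∀ i ∈ F, i < F.sup id + 1 := fun i hi =>
    Nat.lt_succ_of_le (Finset.le_sup (f := id) hi)
  exact ⟨F.sup id, {f | (fun i : F => f ⟨i, hle i i.2⟩) ∈ S}, rfl⟩

end Paths

section Entry

variable {α : Type*}

def hits (S : Set α) : Set (ℕ → α) := {ω | ∃ t, ω t ∈ S}

def hitsBy (S : Set α) (N : ℕ) : Set (ℕ → α) := {ω | ∃ t ≤ N, ω t ∈ S}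

def firstEntryPaths (S : Set α) (n : ℕ) : Set (Fin (n + 1) → α) :=
  {e | e (Fin.last n) ∈ S ∧ ∀ i : Fin (n + 1), i.1 < n → e i ∉ S}

def afterFirstEntry (S : Set α) (E : α → Set (ℕ → α)) : Set (ℕ → α) :=
  {ω | ∃ n, ω n ∈ S ∧ (∀ i < n, ω i ∉ S) ∧ pathShift n ω ∈ E (ω n)}

lemma mem_afterFirstEntry_of_mem {S : Set α} {E : α → Set (ℕ → α)} {ω : ℕ → α} {t : ℕ}
    (ht : ω t ∈ S) (hE : ∀ n ≤ t, ω n ∈ S → pathShift n ω ∈ E (ω n)) :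
    ω ∈ afterFirstEntry S E := by
  have hentry : ∃ n, ω n ∈ S := ⟨t, ht⟩
  have hle : Nat.find hentry ≤ t := Nat.find_min' hentry ht
  exact ⟨Nat.find hentry, Nat.find_spec hentry, fun i hi => Nat.find_min hentry hi,
    hE _ hle (Nat.find_spec hentry)⟩

lemma monotone_hitsBy (S : Set α) : Monotone (hitsBy S) :=
  fun _ _ hNM _ ⟨t, ht, htS⟩ => ⟨t, ht.trans hNM, htS⟩

lemma iUnion_hitsBy (S : Set α) : ⋃ N, hitsBy S N = hits S := by
  ext ω
  simp only [Set.mem_iUnion, hitsBy, hits, Set.mem_ofPred_eq]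
  exact ⟨fun ⟨_, t, _, ht⟩ => ⟨t, ht⟩, fun ⟨t, ht⟩ => ⟨t, t, le_rfl, ht⟩⟩

lemma hitsBy_eq_preimage (S : Set α) {N m : ℕ} (hNm : N ≤ m) :
    hitsBy S N = pathPrefix m ⁻¹' {w | ∃ i : Fin (m + 1), i.1 ≤ N ∧ w i ∈ S} := by
  ext ω
  simp only [hitsBy, Set.mem_preimage, Set.mem_ofPred_eq, pathPrefix]
  exact ⟨fun ⟨t, ht, htS⟩ => ⟨⟨t, by omega⟩, ht, htS⟩, fun ⟨i, hi, hiS⟩ => ⟨i, hi, hiS⟩⟩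

lemma hitsBy_zero (S : Set α) : hitsBy S 0 = pathPrefix 0 ⁻¹' firstEntryPaths S 0 := by
  ext ω
  simp only [hitsBy, firstEntryPaths, Set.mem_preimage, Set.mem_ofPred_eq, pathPrefix,
    Nat.le_zero, exists_eq_left, Fin.val_last, Nat.not_lt_zero, false_imp_iff, implies_true,
    and_true]

lemma hitsBy_succ (S : Set α) (N : ℕ) :
    hitsBy S (N + 1) = hitsBy S N ∪ pathPrefix (N + 1) ⁻¹' firstEntryPaths S (N + 1) := by
  ext ω
  simp only [hitsBy, firstEntryPaths, Set.mem_union, Set.mem_preimage, Set.mem_ofPred_eq,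
    pathPrefix, Fin.val_last]
  constructor
  · rintro ⟨t, ht, htS⟩
    by_cases hN : ∃ t ≤ N, ω t ∈ S
    · exact Or.inl hN
    · simp only [not_exists, not_and] at hN
      obtain rfl : t = N + 1 := by
        by_contra htN
        exact hN t (by omega) htS
      exact Or.inr ⟨htS, fun i hi => hN i (by omega)⟩
  · rintro (⟨t, ht, htS⟩ | ⟨hS, -⟩)
    · exact ⟨t, by omega, htS⟩
    · exact ⟨N + 1, le_rfl, hS⟩

lemma afterFirstEntry_subset (S : Set α) (E : α → Set (ℕ → α)) :
    afterFirstEntry S E ⊆ ⋃ n, ⋃ e : firstEntryPaths S n,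
      pathPrefix n ⁻¹' {e.1} ∩ pathShift n ⁻¹' E (e.1 (Fin.last n)) := by
  rintro ω ⟨n, hnS, hbefore, hE⟩
  simp only [Set.mem_iUnion]
  exact ⟨n, ⟨pathPrefix n ω, hnS, fun i hi => hbefore i hi⟩, rfl, hE⟩

end Entry

section Visits

variable {α : Type*}

def visits : (ℕ → Set α) → ℕ → Set (ℕ → α)
  | _, 0 => Set.univ
  | S, k + 1 => afterFirstEntry (S 0) fun _ => visits (fun i => S (i + 1)) k

lemma pathShift_mem_visits {S : ℕ → Set α} {k : ℕ} {ω : ℕ → α} {m : ℕ} {t : ℕ → ℕ}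
    (ht : MonotoneOn t (Set.Iio k)) (hm : ∀ i < k, m ≤ t i) (hS : ∀ i < k, ω (t i) ∈ S i) :
    pathShift m ω ∈ visits S k := by
  induction k generalizing S ω m t with
  | zero => trivial
  | succ k ih =>
    have hm0 := hm 0 k.succ_pos
    have h0 : pathShift m ω (t 0 - m) ∈ S 0 := by
      rw [pathShift, Nat.sub_add_cancel hm0]
      exact hS 0 k.succ_pos
    refine mem_afterFirstEntry_of_mem h0 fun n hn _ => ?_
    rw [pathShift_pathShift]
    refine ih (t := fun i => t (i + 1)) (fun i hi j hj hij => ht (by simpa using hi)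
      (by simpa using hj) (by omega)) (fun i hi => ?_) (fun i hi => hS (i + 1) (by omega))
    have := ht (by simp) (by simp; omega) (Nat.zero_le (i + 1))
    omega

def alternating (P Q : Set α) (i : ℕ) : Set α := if Even i then P else Q

lemma alternating_succ (P Q : Set α) : (fun i => alternating P Q (i + 1)) = alternating Q P := by
  funext i
  simp only [alternating, Nat.even_add_one, ite_not]

lemma visits_alternating_succ (P Q : Set α) (k : ℕ) :
    visits (alternating P Q) (k + 1) = afterFirstEntry P fun _ => visits (alternating Q P) k := by
  rw [visits, alternating_succ]
  simp [alternating]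

lemma mem_alternating_iff {P Q : Set α} {i : ℕ} {x : α} :
    x ∈ alternating P Q i ↔ (Even i → x ∈ P) ∧ (¬Even i → x ∈ Q) := by
  unfold alternating
  split_ifs with h <;> simp [h]

lemma pathShift_mem_visits_alternating {P Q : Set α} {k n : ℕ} {ω : ℕ → α} {t : ℕ → ℕ}
    (ht : MonotoneOn t (Set.Iic k)) (hn : n ≤ t 0) (hω : ∀ i ≤ k, ω (t i) ∈ alternating P Q i) :
    pathShift n ω ∈ visits (alternating P Q) k ∧ pathShift n ω ∈ visits (alternating Q P) k := by
  have hle : ∀ i ≤ k, n ≤ t i := fun i hi => hn.trans (ht (by simp) hi (Nat.zero_le i))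
  constructor
  · exact pathShift_mem_visits (ht.mono Set.Iio_subset_Iic_self)
      (fun i hi => hle i hi.le) (fun i hi => hω i hi.le)
  · refine pathShift_mem_visits (t := fun i => t (i + 1))
      (fun i hi j hj hij => ht (Nat.succ_le_of_lt hi) (Nat.succ_le_of_lt hj) (by omega))
      (fun i hi => hle (i + 1) hi) (fun i hi => ?_)
    rw [← alternating_succ]
    exact hω (i + 1) hi

lemma alternatesEvent_subset (P Q : Set α) (k : ℕ) :
    alternatesEvent P Q k ⊆ afterFirstEntry (P ∪ Q) fun s =>
      if s ∈ P then visits (alternating Q P) k else visits (alternating P Q) k := by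
  rintro ω ⟨t, ht, hω⟩
  simp only [← mem_alternating_iff] at hω
  rcases hω with hω | hω
  · refine mem_afterFirstEntry_of_mem (Or.inl (hω 0 k.zero_le)) fun n hn _ => ?_
    have hvisits := pathShift_mem_visits_alternating ht.monotoneOn hn hω
    split_ifs
    exacts [hvisits.2, hvisits.1]
  · refine mem_afterFirstEntry_of_mem (Or.inr (hω 0 k.zero_le)) fun n hn _ => ?_
    have hvisits := pathShift_mem_visits_alternating ht.monotoneOn hn hω
    split_ifs
    exacts [hvisits.1, hvisits.2]

end Visits

namespace MarkovChain

variable (M : MarkovChain V)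

instance (z : V) : IsProbabilityMeasure (M.μ z) := M.μ_prob z

noncomputable def transProb (x y : V) : ℝ≥0∞ := ENNReal.ofReal (M.p x y)

lemma tsum_transProb (x : V) : ∑' y, M.transProb x y = 1 := by
  have h := M.p_row_sum x
  simp only [transProb]
  rw [← ENNReal.ofReal_tsum_of_nonneg (M.p_nonneg x) h.summable, h.tsum_eq,
    ENNReal.ofReal_one]

noncomputable def pathWeight (z : V) {n : ℕ} (e : Fin (n + 1) → V) : ℝ≥0∞ :=
  if e 0 = z then ∏ i : Fin n, M.transProb (e i.castSucc) (e i.succ) else 0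

lemma measure_pathPrefix_preimage_singleton (z : V) {n : ℕ} (e : Fin (n + 1) → V) :
    M.μ z (pathPrefix n ⁻¹' {e}) = M.pathWeight z e := by
  have hset : pathPrefix n ⁻¹' {e} = {ω : ℕ → V | ∀ i ≤ n, ω i = extendPath e i} := by
    ext ω
    simp only [Set.mem_preimage, Set.mem_singleton_iff, Set.mem_ofPred_eq, funext_iff]
    refine ⟨fun h i hi => by rw [extendPath_of_le e hi, ← h]; rfl, fun h i => ?_⟩
    rw [pathPrefix, h i (by omega), extendPath_of_le e (by omega)]
  rw [hset, ← ENNReal.ofReal_toReal (measure_ne_top _ _), M.μ_cyl, pathWeight, extendPath_zero]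
  split_ifs
  · rw [ENNReal.ofReal_prod_of_nonneg fun i _ => M.p_nonneg _ _, ← Fin.prod_univ_eq_prod_range]
    refine Finset.prod_congr rfl fun i _ => ?_
    rw [extendPath_of_le e (by omega), extendPath_of_le e (by omega)]
    rfl
  · exact ENNReal.ofReal_zero

lemma pathWeight_cons (z x : V) {n : ℕ} (f : Fin (n + 1) → V) :
    M.pathWeight z (Fin.cons x f : Fin (n + 2) → V) =
      if x = z then M.transProb x (f 0) * M.pathWeight (f 0) f else 0 := by
  simp only [pathWeight, Fin.cons_zero, Fin.prod_univ_succ, Fin.castSucc_zero,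
    ← Fin.succ_castSucc, Fin.cons_succ, if_true]

lemma pathWeight_glue (z : V) {n m : ℕ} (e : Fin (n + 1) → V) {f : Fin (m + 1) → V}
    (hf : f 0 = e (Fin.last n)) :
    M.pathWeight z (pathGlue e f) = M.pathWeight z e * M.pathWeight (e (Fin.last n)) f := by
  have h0 : pathGlue e f 0 = e 0 := pathGlue_of_le e hf 0 (Nat.zero_le n)
  simp only [pathWeight, h0, hf, if_true, Fin.prod_univ_add]
  split_ifs
  · congr 1
    · refine Finset.prod_congr rfl fun i _ => ?_
      rw [pathGlue_of_le e hf _ (by simp), pathGlue_of_le e hf _ (by simp)]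
      rfl
    · refine Finset.prod_congr rfl fun i _ => ?_
      rw [pathGlue_of_ge e f _ (by simp), pathGlue_of_ge e f _ (by simp; omega)]
      congr 3 <;> simp; omega
  · rw [zero_mul]

lemma tsum_mul_pathWeight (n : ℕ) (g : V → ℝ≥0∞) :
    ∑' f : Fin (n + 1) → V, g (f 0) * M.pathWeight (f 0) f = ∑' x, g x := by
  induction n generalizing g with
  | zero =>
    rw [← (Equiv.funUnique (Fin 1) V).symm.tsum_eq]
    simp [pathWeight, Equiv.funUnique]
  | succ n ih =>
    rw [← (Fin.consEquiv fun _ : Fin (n + 2) => V).tsum_eq, ENNReal.tsum_prod']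
    refine tsum_congr fun x => ?_
    have hcons : ∀ f : Fin (n + 1) → V,
        g x * M.pathWeight x (Fin.consEquiv (fun _ : Fin (n + 2) => V) (x, f)) =
          (g x * M.transProb x (f 0)) * M.pathWeight (f 0) f := by
      intro f
      rw [show Fin.consEquiv (fun _ : Fin (n + 2) => V) (x, f) = Fin.cons x f from rfl,
        pathWeight_cons, if_pos rfl, mul_assoc]
    simp only [Fin.consEquiv_apply, Fin.cons_zero]
    rw [tsum_congr hcons, ih fun y => g x * M.transProb x y, ENNReal.tsum_mul_left,
      tsum_transProb, mul_one]

lemma tsum_pathWeight (z : V) (n : ℕ) : ∑' e : Fin (n + 1) → V, M.pathWeight z e = 1 := by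
  have h : ∀ e : Fin (n + 1) → V,
      M.pathWeight z e = (if e 0 = z then 1 else 0) * M.pathWeight (e 0) e := by
    intro e
    split_ifs with h
    · rw [one_mul, h]
    · rw [zero_mul, pathWeight, if_neg h]
  rw [tsum_congr h, tsum_mul_pathWeight M n fun x => if x = z then 1 else 0, tsum_ite_eq]

lemma measure_pathPrefix_preimage_le (z : V) {n : ℕ} (T : Set (Fin (n + 1) → V)) :
    M.μ z (pathPrefix n ⁻¹' T) ≤ ∑' e : T, M.pathWeight z e.1 := by
  have hcover : pathPrefix n ⁻¹' T = ⋃ e : T, pathPrefix n ⁻¹' {(e : Fin (n + 1) → V)} := by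
    ext ω
    simp only [Set.mem_preimage, Set.mem_iUnion, Set.mem_singleton_iff, Subtype.exists,
      exists_prop, exists_eq_right']
  rw [hcover]
  exact (measure_iUnion_le _).trans_eq
    (tsum_congr fun e => M.measure_pathPrefix_preimage_singleton z e.1)

/-- Exact, although `pathPrefix n ⁻¹' T` need not be measurable: the bounds for `T` and `Tᶜ`
already add up to `1`. -/
lemma measure_pathPrefix_preimage (z : V) {n : ℕ} (T : Set (Fin (n + 1) → V)) :
    M.μ z (pathPrefix n ⁻¹' T) = ∑' e : T, M.pathWeight z e.1 := by
  refine le_antisymm (M.measure_pathPrefix_preimage_le z T) ?_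
  have htotal : ∑' e : T, M.pathWeight z e.1 + ∑' e : ↥Tᶜ, M.pathWeight z e.1 = 1 := by
    rw [Summable.tsum_add_tsum_compl ENNReal.summable ENNReal.summable, tsum_pathWeight]
  have hcompl_ne_top : ∑' e : ↥Tᶜ, M.pathWeight z e.1 ≠ ⊤ :=
    ne_top_of_le_ne_top ENNReal.one_ne_top (htotal ▸ le_add_self)
  have hone : 1 ≤ M.μ z (pathPrefix n ⁻¹' T) + M.μ z (pathPrefix n ⁻¹' Tᶜ) := by
    rw [← measure_univ (μ := M.μ z), ← Set.union_compl_self (pathPrefix n ⁻¹' T),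
      ← Set.preimage_compl]
    exact measure_union_le _ _
  rw [ENNReal.eq_sub_of_add_eq hcompl_ne_top htotal, tsub_le_iff_right]
  exact hone.trans (add_le_add_right (M.measure_pathPrefix_preimage_le z Tᶜ) _)

lemma tsum_pathWeight_glue (z : V) {n m : ℕ} (e : Fin (n + 1) → V) (T : Set (Fin (m + 1) → V)) :
    ∑' w : {w | pathInit n m w = e ∧ pathTail n m w ∈ T}, M.pathWeight z w.1 =
      M.pathWeight z e * ∑' f : T, M.pathWeight (e (Fin.last n)) f.1 := by
  set T' : Set (Fin (n + m + 1) → V) := {w | pathInit n m w = e ∧ pathTail n m w ∈ T}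
  have hinj : Function.Injective (pathGlue (m := m) e) := fun f g hfg => by
    rw [← pathTail_pathGlue e f, hfg, pathTail_pathGlue]
  have hsupp : (T'.indicator (M.pathWeight z)).support ⊆ Set.range (pathGlue e) := by
    intro w hw
    obtain ⟨hinit, -⟩ : w ∈ T' := Set.mem_of_indicator_ne_zero hw
    exact ⟨pathTail n m w, by rw [← hinit, pathGlue_pathInit_pathTail]⟩
  have hglue : ∀ f : Fin (m + 1) → V,
      T'.indicator (M.pathWeight z) (pathGlue e f) =
        M.pathWeight z e * T.indicator (M.pathWeight (e (Fin.last n))) f := by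
    intro f
    by_cases hf : f 0 = e (Fin.last n)
    · have hmem : pathGlue e f ∈ T' ↔ f ∈ T := by
        simp only [T', Set.mem_ofPred_eq, pathInit_pathGlue e hf, pathTail_pathGlue, true_and]
      by_cases hfT : f ∈ T
      · rw [Set.indicator_of_mem (hmem.mpr hfT), Set.indicator_of_mem hfT,
          M.pathWeight_glue z e hf]
      · rw [Set.indicator_of_notMem (mt hmem.mp hfT), Set.indicator_of_notMem hfT, mul_zero]
    · have hnot : pathGlue e f ∉ T' := fun ⟨hinit, _⟩ => hf <| by
        rw [← hinit, pathInit, pathGlue_of_ge e f _ (by simp)]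
        simp
      have hzero : M.pathWeight (e (Fin.last n)) f = 0 := by rw [pathWeight, if_neg hf]
      rw [Set.indicator_of_notMem hnot]
      by_cases hfT : f ∈ T
      · rw [Set.indicator_of_mem hfT, hzero, mul_zero]
      · rw [Set.indicator_of_notMem hfT, mul_zero]
  rw [tsum_subtype, tsum_subtype, ← hinj.tsum_eq hsupp, tsum_congr hglue, ENNReal.tsum_mul_left]

lemma measure_pathPrefix_inter_pathShift_pathPrefix (z : V) {n m : ℕ} (e : Fin (n + 1) → V)
    (T : Set (Fin (m + 1) → V)) :
    M.μ z (pathPrefix n ⁻¹' {e} ∩ pathShift n ⁻¹' (pathPrefix m ⁻¹' T)) =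
      M.pathWeight z e * M.μ (e (Fin.last n)) (pathPrefix m ⁻¹' T) := by
  have hset : pathPrefix n ⁻¹' {e} ∩ pathShift n ⁻¹' (pathPrefix m ⁻¹' T) =
      pathPrefix (n + m) ⁻¹' {w | pathInit n m w = e ∧ pathTail n m w ∈ T} := rfl
  rw [hset, measure_pathPrefix_preimage, measure_pathPrefix_preimage, tsum_pathWeight_glue]

lemma map_pathShift_restrict (z : V) {n : ℕ} (e : Fin (n + 1) → V) :
    ((M.μ z).restrict (pathPrefix n ⁻¹' {e})).map (pathShift n) =
      M.pathWeight z e • M.μ (e (Fin.last n)) := by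
  have hmeas := measurable_pathShift (α := V) n
  have happly : ∀ s, MeasurableSet s →
      ((M.μ z).restrict (pathPrefix n ⁻¹' {e})).map (pathShift n) s =
        M.μ z (pathPrefix n ⁻¹' {e} ∩ pathShift n ⁻¹' s) := fun s hs => by
    rw [Measure.map_apply hmeas hs, Measure.restrict_apply (hmeas hs), Set.inter_comm]
  refine ext_of_generate_finite _ generateFrom_measurableCylinders.symm
    isPiSystem_measurableCylinders (fun s hs => ?_) ?_
  · obtain ⟨m, T, rfl⟩ := exists_pathPrefix_preimage_of_mem_measurableCylinders hs
    rw [happly _ (MeasurableSet.of_mem_measurableCylinders hs), Measure.smul_apply, smul_eq_mul,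
      measure_pathPrefix_inter_pathShift_pathPrefix]
  · rw [happly _ MeasurableSet.univ, Set.preimage_univ, Set.inter_univ, Measure.smul_apply,
      smul_eq_mul, measure_univ, mul_one, measure_pathPrefix_preimage_singleton]

lemma measure_pathPrefix_inter_pathShift_le (z : V) {n : ℕ} (e : Fin (n + 1) → V)
    (E : Set (ℕ → V)) :
    M.μ z (pathPrefix n ⁻¹' {e} ∩ pathShift n ⁻¹' E) ≤
      M.pathWeight z e * M.μ (e (Fin.last n)) E := by
  set B := toMeasurable (M.μ (e (Fin.last n))) E
  have hB : MeasurableSet B := measurableSet_toMeasurable _ _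
  calc M.μ z (pathPrefix n ⁻¹' {e} ∩ pathShift n ⁻¹' E)
      ≤ M.μ z (pathShift n ⁻¹' B ∩ pathPrefix n ⁻¹' {e}) :=
        measure_mono fun ω hω => ⟨subset_toMeasurable _ _ hω.2, hω.1⟩
    _ = ((M.μ z).restrict (pathPrefix n ⁻¹' {e})).map (pathShift n) B := by
        rw [Measure.map_apply (measurable_pathShift n) hB,
          Measure.restrict_apply (measurable_pathShift n hB)]
    _ = M.pathWeight z e * M.μ (e (Fin.last n)) E := by
        rw [map_pathShift_restrict, Measure.smul_apply, smul_eq_mul, measure_toMeasurable]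

lemma measure_pathPrefix_union (z : V) {n : ℕ} {T T' : Set (Fin (n + 1) → V)}
    (hTT' : Disjoint T T') :
    M.μ z (pathPrefix n ⁻¹' T ∪ pathPrefix n ⁻¹' T') =
      M.μ z (pathPrefix n ⁻¹' T) + M.μ z (pathPrefix n ⁻¹' T') := by
  rw [← Set.preimage_union, measure_pathPrefix_preimage, measure_pathPrefix_preimage,
    measure_pathPrefix_preimage,
    Summable.tsum_union_disjoint hTT' ENNReal.summable ENNReal.summable]

lemma measure_pathPrefix_compl (z : V) {n : ℕ} (T : Set (Fin (n + 1) → V)) :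
    M.μ z (pathPrefix n ⁻¹' T)ᶜ = 1 - M.μ z (pathPrefix n ⁻¹' T) := by
  refine ENNReal.eq_sub_of_add_eq (measure_ne_top _ _) ?_
  rw [← Set.preimage_compl, ← M.measure_pathPrefix_union z disjoint_compl_left, Set.preimage_compl,
    Set.compl_union_self, measure_univ]

lemma measure_hitsBy (S : Set V) (z : V) (N : ℕ) :
    M.μ z (hitsBy S N) =
      ∑ n ∈ Finset.range (N + 1), M.μ z (pathPrefix n ⁻¹' firstEntryPaths S n) := by
  induction N with
  | zero => rw [hitsBy_zero, Finset.sum_range_one]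
  | succ N ih =>
    have hdisj : Disjoint {w : Fin (N + 2) → V | ∃ i : Fin (N + 2), i.1 ≤ N ∧ w i ∈ S}
        (firstEntryPaths S (N + 1)) :=
      Set.disjoint_left.mpr fun w ⟨i, hi, hiS⟩ ⟨_, hnot⟩ => hnot i (by omega) hiS
    rw [hitsBy_succ, hitsBy_eq_preimage S N.le_succ, M.measure_pathPrefix_union z hdisj,
      ← hitsBy_eq_preimage S N.le_succ, ih, Finset.sum_range_succ _ (N + 1)]

lemma measure_hits (S : Set V) (z : V) :
    M.μ z (hits S) = ∑' n, M.μ z (pathPrefix n ⁻¹' firstEntryPaths S n) := by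
  rw [← iUnion_hitsBy, (monotone_hitsBy S).measure_iUnion,
    ENNReal.tsum_eq_iSup_nat' (tendsto_add_atTop_nat 1)]
  exact iSup_congr (M.measure_hitsBy S z)

lemma measure_compl_hits_le (S : Set V) (z : V) :
    M.μ z (hits S)ᶜ ≤ 1 - M.μ z (hits S) := by
  rw [← iUnion_hitsBy, (monotone_hitsBy S).measure_iUnion, ENNReal.sub_iSup ENNReal.one_ne_top]
  refine le_iInf fun N => ?_
  rw [hitsBy_eq_preimage S le_rfl, ← measure_pathPrefix_compl, ← hitsBy_eq_preimage S le_rfl]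
  exact measure_mono (Set.compl_subset_compl.mpr (Set.subset_iUnion (hitsBy S) N))

lemma measure_afterFirstEntry_le (S : Set V) (E : V → Set (ℕ → V)) {c : ℝ≥0∞}
    (hE : ∀ s ∈ S, M.μ s (E s) ≤ c) (z : V) :
    M.μ z (afterFirstEntry S E) ≤ c * M.μ z (hits S) := by
  have hstep : ∀ n (e : firstEntryPaths S n),
      M.μ z (pathPrefix n ⁻¹' {e.1} ∩ pathShift n ⁻¹' E (e.1 (Fin.last n))) ≤
        M.pathWeight z e.1 * c := fun n e =>
    (M.measure_pathPrefix_inter_pathShift_le z e.1 _).trans (mul_le_mul_right (hE _ e.2.1) _)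
  calc M.μ z (afterFirstEntry S E)
      ≤ ∑' n, ∑' e : firstEntryPaths S n,
          M.μ z (pathPrefix n ⁻¹' {e.1} ∩ pathShift n ⁻¹' E (e.1 (Fin.last n))) :=
        (measure_mono (afterFirstEntry_subset S E)).trans <| (measure_iUnion_le _).trans <|
          ENNReal.tsum_le_tsum fun n => measure_iUnion_le _
    _ ≤ ∑' n, ∑' e : firstEntryPaths S n, M.pathWeight z e.1 * c :=
        ENNReal.tsum_le_tsum fun n => ENNReal.tsum_le_tsum (hstep n)
    _ = c * M.μ z (hits S) := by
        simp only [← measure_pathPrefix_preimage, ENNReal.tsum_mul_left, measure_hits, mul_comm]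

lemma measure_visits_alternating_le {P Q : Set V} {c : ℝ≥0∞}
    (hPQ : ∀ s ∈ P, M.μ s (hits Q) ≤ c) (hQP : ∀ s ∈ Q, M.μ s (hits P) ≤ c) (k : ℕ) :
    ∀ v ∈ Q, M.μ v (visits (alternating P Q) k) ≤ c ^ k := by
  induction k generalizing P Q with
  | zero => exact fun v _ => prob_le_one.trans_eq (pow_zero c).symm
  | succ k ih =>
    intro v hv
    rw [visits_alternating_succ, pow_succ]
    exact (M.measure_afterFirstEntry_le P _ (ih hQP hPQ) v).trans
      (mul_le_mul_right (hQP v hv) _)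

lemma measure_hits_le_of_shift_invariant {A : Set (ℕ → V)}
    (hA : (fun ω : ℕ → V => fun n => ω (n + 1)) ⁻¹' A = A) {r : ℝ} (hr0 : 0 ≤ r) (hr1 : r < 1)
    {S : Set V} (hS : ∀ s ∈ S, (M.μ s A).toReal ≤ r) {v : V} (hv : 1 - r ≤ (M.μ v A).toReal) :
    M.μ v (hits S) ≤ ENNReal.ofReal (r / (1 - r)) := by
  have hsplit : A ⊆ afterFirstEntry S (fun _ => A) ∪ (hits S)ᶜ := by
    intro ω hω
    by_cases hhit : ω ∈ hits S
    · exact Or.inl (mem_afterFirstEntry_of_mem hhit.choose_spec fun n _ _ => by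
        rwa [Set.mem_preimage.symm, preimage_pathShift_of_shift_invariant hA])
    · exact Or.inr hhit
  have hSA : ∀ s ∈ S, M.μ s A ≤ ENNReal.ofReal r := fun s hs =>
    (ENNReal.le_ofReal_iff_toReal_le (measure_ne_top _ _) hr0).mpr (hS s hs)
  have hbound : M.μ v A ≤ ENNReal.ofReal r * M.μ v (hits S) + (1 - M.μ v (hits S)) :=
    (measure_mono hsplit).trans <| (measure_union_le _ _).trans <|
      add_le_add (M.measure_afterFirstEntry_le S _ hSA v) (M.measure_compl_hits_le S v)
  have hreal : (M.μ v A).toReal ≤ r * (M.μ v (hits S)).toReal + (1 - (M.μ v (hits S)).toReal) := by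
    have := ENNReal.toReal_mono (by finiteness) hbound
    rwa [ENNReal.toReal_add (by finiteness) (by finiteness), ENNReal.toReal_mul,
      ENNReal.toReal_ofReal hr0, ENNReal.toReal_sub_of_le prob_le_one ENNReal.one_ne_top,
      ENNReal.toReal_one] at this
  refine (ENNReal.le_ofReal_iff_toReal_le (measure_ne_top _ _) ?_).mpr ?_
  · exact div_nonneg hr0 (by linarith)
  · rw [le_div_iff₀ (by linarith)]
    nlinarith

lemma measure_alternatesEvent_le {P Q : Set V} {c : ℝ≥0∞}
    (hPQ : ∀ s ∈ P, M.μ s (hits Q) ≤ c) (hQP : ∀ s ∈ Q, M.μ s (hits P) ≤ c) (z : V) (k : ℕ) :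
    M.μ z (alternatesEvent P Q k) ≤ c ^ k := by
  have hvisits : ∀ s ∈ P ∪ Q, M.μ s
      (if s ∈ P then visits (alternating Q P) k else visits (alternating P Q) k) ≤ c ^ k := by
    intro s hs
    split_ifs with hsP
    · exact M.measure_visits_alternating_le hQP hPQ k s hsP
    · exact M.measure_visits_alternating_le hPQ hQP k s (hs.resolve_left hsP)
  exact (measure_mono (alternatesEvent_subset P Q k)).trans <|
    (M.measure_afterFirstEntry_le _ _ hvisits z).trans (mul_le_of_le_one_right' prob_le_one)

lemma measure_hits_tailSmall_le {A : Set (ℕ → V)}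
    (hA : (fun ω : ℕ → V => fun n => ω (n + 1)) ⁻¹' A = A) {r : ℝ} (hr0 : 0 ≤ r) (hr1 : r < 1)
    {v : V} (hv : v ∈ tailBig M A r) :
    M.μ v (hits (tailSmall M A r)) ≤ ENNReal.ofReal (r / (1 - r)) :=
  M.measure_hits_le_of_shift_invariant hA hr0 hr1 (fun _ hs => le_of_lt hs) (le_of_lt hv)

lemma measure_hits_tailBig_le {A : Set (ℕ → V)} (hA : IsTailEvent A) {r : ℝ} (hr0 : 0 ≤ r)
    (hr1 : r < 1) {v : V} (hv : v ∈ tailSmall M A r) :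
    M.μ v (hits (tailBig M A r)) ≤ ENNReal.ofReal (r / (1 - r)) := by
  have hcompl : ∀ x, (M.μ x Aᶜ).toReal = 1 - (M.μ x A).toReal := fun x =>
    probReal_compl_eq_one_sub hA.1
  have hv' : (M.μ v A).toReal < r := hv
  refine M.measure_hits_le_of_shift_invariant (A := Aᶜ) (by rw [Set.preimage_compl, hA.2])
    hr0 hr1 (fun x (hx : (M.μ x A).toReal > 1 - r) => ?_) ?_ <;>
  · rw [hcompl]
    linarith

end MarkovChain

/-- For a tail event `A` and `r ∈ (0, 1/2)`, the probability that the
chain started at `z` alternates `k` times between `A_r` and `Z_r` is less than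
`(2r)^k`. -/
theorem alternation_prob (M : MarkovChain V) (A : Set (ℕ → V)) (hA : IsTailEvent A)
    (r : ℝ) (hr : r ∈ Set.Ioo (0 : ℝ) (1/2)) (z : V) (k : ℕ) (hk : 1 ≤ k) :
    (M.μ z (alternatesEvent (tailBig M A r) (tailSmall M A r) k)).toReal
      < (2 * r) ^ k := by
  obtain ⟨hr0, hr1⟩ := hr
  have hc0 : 0 ≤ r / (1 - r) := div_nonneg hr0.le (by linarith)
  have hc : r / (1 - r) < 2 * r := by
    rw [div_lt_iff₀ (by linarith)]
    nlinarith
  have hle := M.measure_alternatesEvent_le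
    (fun _ hv => M.measure_hits_tailSmall_le hA.2 hr0.le (by linarith) hv)
    (fun _ hv => M.measure_hits_tailBig_le hA hr0.le (by linarith) hv) z k
  calc (M.μ z (alternatesEvent (tailBig M A r) (tailSmall M A r) k)).toReal
      ≤ (r / (1 - r)) ^ k := by
        simpa [ENNReal.toReal_pow, ENNReal.toReal_ofReal hc0] using
          ENNReal.toReal_mono (by finiteness) hle
    _ < (2 * r) ^ k := pow_lt_pow_left₀ hc hc0 (by omega)
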